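/- For a polynomial f : ℝ → ℝ, the standard Gaussian measure μ on ℝ, and any k ∈ ℕ, the Houdré–Kagan inequalities hold: ∑_{l=1}^{2k} ((−1)^{l+1}/l!) ∫ (f^{(l)})² dμ ≤ ∫ f² dμ − (∫ f dμ)² ≤ ∑_{l=1}^{2k−1} ((−1)^{l+1}/l!) ∫ (f^{(l)})² dμ. -/

import Mathlib

/-!
Expand `f = ∑ cₙ Heₙ` in the probabilists' Hermite polynomials. Gaussian integration by parts
gives the orthogonality `E[Heₘ Heₙ] = n! δₘₙ`, and `Heₙ' = n Heₙ₋₁`, so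
`E[(f⁽ˡ⁾)²] = l! ∑ cₙ² n! (n choose l)`. Hence, by the partial alternating sums of binomial
coefficients,
`Var f - ∑_{l=1}^m (-1)^(l+1)/l! E[(f⁽ˡ⁾)²] = (-1)^m ∑_{n ≥ 1} cₙ² n! (n-1 choose m)`,
whose sign is `(-1)^m`.
-/

open MeasureTheory Polynomial ProbabilityTheory
open scoped NNReal Nat

section GaussianIntegrationByParts

variable {μ : ℝ} {v : ℝ≥0}

lemma integrable_eval_gaussianReal (p : ℝ[X]) :
    Integrable (fun x ↦ p.eval x) (gaussianReal μ v) := by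
  simp_rw [eval_eq_sum_range]
  refine integrable_finsetSum _ fun i _ ↦ Integrable.const_mul ?_ _
  refine ((memLp_id_gaussianReal (i : ℝ≥0)).integrable_norm_pow').mono' (by fun_prop) ?_
  filter_upwards with x
  simp

lemma hasDerivAt_gaussianPDFReal (x : ℝ) :
    HasDerivAt (gaussianPDFReal μ v) (-(x - μ) / v * gaussianPDFReal μ v x) x := by
  have h : HasDerivAt (fun x ↦ -(x - μ) ^ 2 / (2 * v)) (-(x - μ) / v) x :=
    ((((hasDerivAt_id x).sub_const μ).pow 2).neg.div_const (2 * (v : ℝ))).congr_deriv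
      (by simp only [id]; ring)
  exact (h.exp.const_mul (Real.sqrt (2 * Real.pi * v))⁻¹).congr_deriv
    (by rw [gaussianPDFReal_def]; ring)

lemma integrable_gaussianPDFReal_mul_eval (p : ℝ[X]) :
    Integrable (fun x ↦ gaussianPDFReal μ v x * p.eval x) := by
  rcases eq_or_ne v 0 with rfl | hv
  · simp [gaussianPDFReal_zero_var]
  have := integrable_eval_gaussianReal (μ := μ) (v := v) p
  rw [gaussianReal_of_var_ne_zero _ hv, integrable_withDensity_iff_integrable_smul'
    (measurable_gaussianPDF μ v) (ae_of_all _ fun _ ↦ gaussianPDF_lt_top)] at this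
  simpa [toReal_gaussianPDF] using this

theorem integral_sub_mul_eval_gaussianReal (p : ℝ[X]) :
    ∫ x, (x - μ) * p.eval x ∂gaussianReal μ v =
      v * ∫ x, (derivative p).eval x ∂gaussianReal μ v := by
  rcases eq_or_ne v 0 with rfl | hv
  · simp [gaussianReal_zero_var]
  set ρ := gaussianPDFReal μ v
  have hderiv (x : ℝ) : HasDerivAt (fun x ↦ ρ x * p.eval x)
      (ρ x * (derivative p).eval x - (v : ℝ)⁻¹ * (ρ x * ((X - C μ) * p).eval x)) x := by
    refine ((hasDerivAt_gaussianPDFReal x).mul (p.hasDerivAt x)).congr_deriv ?_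
    simp only [eval_mul, eval_sub, eval_X, eval_C, ρ]
    ring
  have hint (q : ℝ[X]) := integrable_gaussianPDFReal_mul_eval (μ := μ) (v := v) q
  -- Integrability of `ρ p` and of its derivative forces `ρ p` to vanish at `±∞`.
  have hzero := integral_eq_zero_of_hasDerivAt_of_integrable hderiv
    ((hint _).sub ((hint _).const_mul _)) (hint p)
  rw [integral_sub (hint _) ((hint _).const_mul _), integral_const_mul, sub_eq_zero] at hzero
  simp only [eval_mul, eval_sub, eval_X, eval_C] at hzero
  simp only [integral_gaussianReal_eq_integral_smul hv, smul_eq_mul, hzero]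
  rw [mul_inv_cancel_left₀ (NNReal.coe_ne_zero.mpr hv)]

end GaussianIntegrationByParts

namespace Polynomial

theorem derivative_hermite_succ (n : ℕ) :
    derivative (hermite (n + 1)) = (n + 1) • hermite n := by
  induction n with
  | zero => simp
  | succ n ih =>
    rw [hermite_succ (n + 1), derivative_sub, derivative_mul, ih, derivative_X, derivative_smul,
      hermite_succ n]
    simp only [add_smul, one_smul, one_mul, smul_sub, mul_add, mul_smul_comm]
    abel

theorem derivative_hermite (n : ℕ) :
    derivative (hermite n) = n • hermite (n - 1) := by
  cases n with
  | zero => simp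
  | succ n => rw [derivative_hermite_succ, Nat.add_sub_cancel]

theorem iterate_derivative_hermite (n l : ℕ) :
    derivative^[l] (hermite n) = n.descFactorial l • hermite (n - l) := by
  induction l with
  | zero => simp
  | succ l ih =>
    rw [Function.iterate_succ_apply', ih, derivative_smul, derivative_hermite,
      Nat.descFactorial_succ, Nat.sub_sub, smul_smul, mul_comm]

end Polynomial

noncomputable def gaussianExpectation : ℝ[X] →ₗ[ℝ] ℝ where
  toFun p := ∫ x, p.eval x ∂gaussianReal 0 1
  map_add' p q := by
    simpa using integral_add (integrable_eval_gaussianReal p) (integrable_eval_gaussianReal q)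
  map_smul' c p := by simp [integral_const_mul]

lemma gaussianExpectation_apply (p : ℝ[X]) :
    gaussianExpectation p = ∫ x, p.eval x ∂gaussianReal 0 1 := rfl

lemma gaussianExpectation_one : gaussianExpectation 1 = 1 := by
  simp [gaussianExpectation_apply]

lemma gaussianExpectation_X_mul (p : ℝ[X]) :
    gaussianExpectation (X * p) = gaussianExpectation (derivative p) := by
  simpa [gaussianExpectation_apply] using integral_sub_mul_eval_gaussianReal (μ := 0) (v := 1) p

noncomputable def hermiteReal (n : ℕ) : ℝ[X] := (hermite n).map (Int.castRingHom ℝ)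

lemma hermiteReal_zero : hermiteReal 0 = 1 := by simp [hermiteReal]

lemma hermiteReal_succ (n : ℕ) :
    hermiteReal (n + 1) = X * hermiteReal n - derivative (hermiteReal n) := by
  simp [hermiteReal, hermite_succ, derivative_map]

lemma degree_hermiteReal (n : ℕ) : (hermiteReal n).degree = n := by
  rw [hermiteReal, (hermite_monic n).degree_map, degree_hermite]

lemma monic_hermiteReal (n : ℕ) : (hermiteReal n).Monic :=
  (hermite_monic n).map _

lemma iterate_derivative_hermiteReal (n l : ℕ) :
    derivative^[l] (hermiteReal n) = (n.descFactorial l : ℝ) • hermiteReal (n - l) := by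
  rw [hermiteReal, iterate_derivative_map, iterate_derivative_hermite, nsmul_eq_mul,
    Polynomial.map_mul, Polynomial.map_natCast, ← nsmul_eq_mul, ← Nat.cast_smul_eq_nsmul ℝ,
    hermiteReal]

lemma derivative_hermiteReal (n : ℕ) :
    derivative (hermiteReal n) = (n : ℝ) • hermiteReal (n - 1) := by
  simpa using iterate_derivative_hermiteReal n 1

lemma gaussianExpectation_hermiteReal_succ_mul (m n : ℕ) :
    gaussianExpectation (hermiteReal (m + 1) * hermiteReal n) =
      n * gaussianExpectation (hermiteReal m * hermiteReal (n - 1)) := by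
  rw [hermiteReal_succ, sub_mul, mul_assoc, map_sub, gaussianExpectation_X_mul, derivative_mul,
    derivative_hermiteReal n, mul_smul_comm, map_add, map_smul, smul_eq_mul]
  ring

theorem gaussianExpectation_hermiteReal_mul (m n : ℕ) :
    gaussianExpectation (hermiteReal m * hermiteReal n) = if m = n then (m ! : ℝ) else 0 := by
  induction m generalizing n with
  | zero =>
    rw [hermiteReal_zero, one_mul]
    cases n with
    | zero => simp [hermiteReal_zero, gaussianExpectation_one]
    | succ n =>
      simpa [hermiteReal_zero] using gaussianExpectation_hermiteReal_succ_mul n 0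
  | succ m ih =>
    rw [gaussianExpectation_hermiteReal_succ_mul, ih]
    cases n with
    | zero => simp
    | succ n =>
      by_cases h : m = n
      · simp [h, Nat.factorial_succ]
      · simp [h]

lemma descFactorial_sq_mul_factorial_sub (m l : ℕ) :
    m.descFactorial l ^ 2 * (m - l)! = l ! * m.choose l * m ! := by
  rcases le_or_gt l m with hlm | hml
  · rw [sq, mul_assoc, mul_comm _ (m - l)!, Nat.factorial_mul_descFactorial hlm,
      Nat.descFactorial_eq_factorial_mul_choose]
  · simp [Nat.descFactorial_eq_zero_iff_lt.mpr hml, Nat.choose_eq_zero_of_lt hml]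

theorem gaussianExpectation_iterate_derivative_hermiteReal_mul (l m n : ℕ) :
    gaussianExpectation (derivative^[l] (hermiteReal m) * derivative^[l] (hermiteReal n)) =
      if m = n then (l ! * m.choose l * m ! : ℝ) else 0 := by
  rw [iterate_derivative_hermiteReal, iterate_derivative_hermiteReal, smul_mul_smul_comm,
    map_smul, gaussianExpectation_hermiteReal_mul, smul_eq_mul]
  by_cases hmn : m = n
  · subst hmn
    rw [if_pos rfl, if_pos rfl, ← sq]
    exact_mod_cast descFactorial_sq_mul_factorial_sub m l
  · by_cases hml : m - l = n - l
    · have : m < l ∨ n < l := by omega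
      rcases this with h | h <;> simp [Nat.descFactorial_eq_zero_iff_lt.mpr h, hmn]
    · simp [hml, hmn]

theorem gaussianExpectation_sq_iterate_derivative_sum_hermiteReal (s : Finset ℕ) (c : ℕ → ℝ)
    (l : ℕ) :
    gaussianExpectation ((derivative^[l] (∑ n ∈ s, c n • hermiteReal n)) ^ 2) =
      l ! * ∑ n ∈ s, c n ^ 2 * n ! * n.choose l := by
  simp only [iterate_derivative_sum, iterate_derivative_smul, sq, Finset.sum_mul_sum,
    smul_mul_smul_comm, map_sum, map_smul, smul_eq_mul,
    gaussianExpectation_iterate_derivative_hermiteReal_mul, mul_ite, mul_zero, Finset.sum_ite_eq]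
  rw [Finset.mul_sum]
  refine Finset.sum_congr rfl fun n hn ↦ ?_
  rw [if_pos hn]
  ring

lemma gaussianExpectation_hermiteReal (n : ℕ) :
    gaussianExpectation (hermiteReal n) = if n = 0 then 1 else 0 := by
  simpa [hermiteReal_zero, eq_comm] using gaussianExpectation_hermiteReal_mul 0 n

theorem exists_eq_sum_hermiteReal (p : ℝ[X]) :
    ∃ c : ℕ → ℝ, p = ∑ n ∈ Finset.range (p.natDegree + 1), c n • hermiteReal n := by
  let S : Sequence ℝ := ⟨hermiteReal, degree_hermiteReal⟩
  have hspan := S.span_degreeLT (m := p.natDegree + 1) fun i _ ↦ by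
    simp [S, (monic_hermiteReal i).leadingCoeff]
  have hp : p ∈ degreeLT ℝ (p.natDegree + 1) := by
    rw [mem_degreeLT]
    exact_mod_cast degree_le_natDegree.trans_lt (WithBot.coe_lt_coe.mpr p.natDegree.lt_succ_self)
  rw [← hspan, ← Finset.coe_range, Submodule.mem_span_image_finset_iff_exists_fun'] at hp
  obtain ⟨c, hc⟩ := hp
  exact ⟨c, hc.symm⟩

lemma one_sub_sum_Icc_neg_one_pow_mul_choose (n m : ℕ) :
    1 - ∑ l ∈ Finset.Icc 1 m, (-1 : ℝ) ^ (l + 1) * (n + 1).choose l = (-1) ^ m * n.choose m := by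
  have h : ∑ l ∈ Finset.range (m + 1), (-1 : ℝ) ^ l * (n + 1).choose l = (-1) ^ m * n.choose m := by
    exact_mod_cast Int.alternating_sum_range_choose_eq_choose
  rw [← h, Finset.range_eq_Ico, Finset.sum_eq_sum_Ico_succ_bot (by omega),
    Finset.Ico_add_one_right_eq_Icc]
  simp [pow_succ]

theorem variance_sub_sum_eq_of_eq_sum_hermiteReal {f : ℝ[X]} {N : ℕ} {c : ℕ → ℝ}
    (hf : f = ∑ n ∈ Finset.range (N + 1), c n • hermiteReal n) (m : ℕ) :
    gaussianExpectation (f ^ 2) - gaussianExpectation f ^ 2 -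
        ∑ l ∈ Finset.Icc 1 m, (-1) ^ (l + 1) / l ! * gaussianExpectation ((derivative^[l] f) ^ 2) =
      (-1) ^ m * ∑ n ∈ Finset.range N, c (n + 1) ^ 2 * (n + 1)! * n.choose m := by
  have hmean : gaussianExpectation f = c 0 := by
    simp [hf, gaussianExpectation_hermiteReal]
  have hsq : gaussianExpectation (f ^ 2) = ∑ n ∈ Finset.range (N + 1), c n ^ 2 * n ! := by
    simpa [hf] using gaussianExpectation_sq_iterate_derivative_sum_hermiteReal _ c 0
  have hderiv (l : ℕ) : (-1) ^ (l + 1) / l ! * gaussianExpectation ((derivative^[l] f) ^ 2) =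
      ∑ n ∈ Finset.range (N + 1), c n ^ 2 * n ! * ((-1) ^ (l + 1) * n.choose l) := by
    rw [hf, gaussianExpectation_sq_iterate_derivative_sum_hermiteReal, Finset.mul_sum,
      Finset.mul_sum]
    refine Finset.sum_congr rfl fun n _ ↦ ?_
    field_simp
  have hzero : ∑ l ∈ Finset.Icc 1 m, (-1 : ℝ) ^ (l + 1) * (0 : ℕ).choose l = 0 :=
    Finset.sum_eq_zero fun l hl ↦ by
      rw [Nat.choose_eq_zero_of_lt (by rw [Finset.mem_Icc] at hl; omega)]; simp
  rw [hmean, hsq, Finset.sum_congr rfl fun l _ ↦ hderiv l, Finset.sum_comm]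
  simp_rw [← Finset.mul_sum]
  rw [Finset.sum_range_succ', Finset.sum_range_succ', hzero, Finset.mul_sum, Nat.factorial_zero,
    Nat.cast_one, mul_one, mul_zero, add_zero, add_sub_cancel_right,
    ← Finset.sum_sub_distrib]
  refine Finset.sum_congr rfl fun n _ ↦ ?_
  linear_combination (c (n + 1) ^ 2 * (n + 1)!) * one_sub_sum_Icc_neg_one_pow_mul_choose n m

theorem neg_one_pow_mul_variance_sub_sum_nonneg (f : ℝ[X]) (m : ℕ) :
    0 ≤ (-1) ^ m * (gaussianExpectation (f ^ 2) - gaussianExpectation f ^ 2 -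
      ∑ l ∈ Finset.Icc 1 m, (-1) ^ (l + 1) / l ! *
        gaussianExpectation ((derivative^[l] f) ^ 2)) := by
  obtain ⟨c, hf⟩ := exists_eq_sum_hermiteReal f
  rw [variance_sub_sum_eq_of_eq_sum_hermiteReal hf, ← mul_assoc, ← pow_add, ← two_mul,
    pow_mul, neg_one_sq, one_pow, one_mul]
  positivity

theorem houdre_kagan (f : Polynomial ℝ) (k : ℕ) (hk : 1 ≤ k) :
    (∑ l ∈ Finset.Icc 1 (2 * k), (-1 : ℝ) ^ (l + 1) / (Nat.factorial l) *
        ∫ x, ((derivative^[l] f).eval x) ^ 2 ∂(gaussianReal 0 1)) ≤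
      (∫ x, f.eval x ^ 2 ∂(gaussianReal 0 1)) -
        (∫ x, f.eval x ∂(gaussianReal 0 1)) ^ 2 ∧
    (∫ x, f.eval x ^ 2 ∂(gaussianReal 0 1)) -
        (∫ x, f.eval x ∂(gaussianReal 0 1)) ^ 2 ≤
      ∑ l ∈ Finset.Icc 1 (2 * k - 1), (-1 : ℝ) ^ (l + 1) / (Nat.factorial l) *
        ∫ x, ((derivative^[l] f).eval x) ^ 2 ∂(gaussianReal 0 1) := by
  have h := neg_one_pow_mul_variance_sub_sum_nonneg f
  simp only [gaussianExpectation_apply, eval_pow] at h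
  have h_even := h (2 * k)
  have h_odd := h (2 * k - 1)
  rw [(even_two_mul k).neg_one_pow, one_mul] at h_even
  rw [Odd.neg_one_pow ⟨k - 1, by omega⟩, neg_one_mul] at h_odd
  constructor <;> linarith
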